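/- arXiv:2510.02965 — 5 statements merged into one kernel-verified Lean document; each statement's English description precedes it below -/
import Mathlib

section
/- Composite gradient mapping lower bound: Let F = f̂ + τĝ where f̂ is L_{f̂}-smooth and μ_{f̂}-strongly convex and ĝ is convex. For L ≥ L_{f̂}, let T_L(y) minimize x ↦ f̂(y) + ⟨∇f̂(y), x-y⟩ + (L/2)‖x-y‖² + τĝ(x) and r_L(y) = L(y - T_L(y)). Then for all x, y: F(x) ≥ f̂(T_L(y)) + τ ĝ(T_L(y)) + ⟨r_L(y), x - y⟩ + (μ_{f̂}/2)‖x - y‖² + (1/(2L))‖r_L(y)‖². -/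
open RealInnerProductSpace

/-!
Three inequalities are added up. Strong convexity of `f̂` bounds `f̂ x` below by its quadratic
minorant at `y`; the descent lemma (Lipschitz gradient, `L_f̂ ≤ L`) bounds `f̂ (T y)` above by the
linear-quadratic part of the model at `y`; and the model `x ↦ m_L(y; x)` is `L`-strongly convex, so
at its minimizer `m_L(y; x) ≥ m_L(y; T y) + L / 2 * ‖x - T y‖ ^ 2`. The terms in `r_L(y)` are then
matched by the identity `⟪r, x - y⟫ + ‖r‖ ^ 2 / (2 L) = L / 2 * (‖x - T y‖ ^ 2 - ‖x - y‖ ^ 2)`.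
-/

open Set Filter Topology

section

variable {E : Type*} [NormedAddCommGroup E] [InnerProductSpace ℝ E]

lemma StrongConvexOn.slope_le {f : E → ℝ} {m t : ℝ} (hf : StrongConvexOn univ m f) (x y : E)
    (ht₀ : 0 < t) (ht₁ : t ≤ 1) :
    t⁻¹ * (f (y + t • (x - y)) - f y) ≤ f x - f y - (1 - t) * (m / 2 * ‖x - y‖ ^ 2) := by
  have hchord := hf.2 (mem_univ y) (mem_univ x) (sub_nonneg.2 ht₁) ht₀.le (sub_add_cancel 1 t)
  rw [smul_eq_mul, smul_eq_mul, norm_sub_rev] at hchord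
  have hline : y + t • (x - y) = (1 - t) • y + t • x := by
    rw [smul_sub, sub_smul, one_smul]; abel
  rw [hline, inv_mul_le_iff₀ ht₀]
  linarith

lemma StrongConvexOn.add_sq_le_of_tendsto_of_le_slope {f : E → ℝ} {m d : ℝ} {D : ℝ → ℝ}
    (hf : StrongConvexOn univ m f) (x y : E) (hD : Tendsto D (𝓝[>] 0) (𝓝 d))
    (hD_le : ∀ᶠ t in 𝓝[>] 0, D t ≤ t⁻¹ * (f (y + t • (x - y)) - f y)) :
    d + m / 2 * ‖x - y‖ ^ 2 ≤ f x - f y := by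
  have hbound : Tendsto (fun t : ℝ ↦ f x - f y - (1 - t) * (m / 2 * ‖x - y‖ ^ 2)) (𝓝[>] 0)
      (𝓝 (f x - f y - m / 2 * ‖x - y‖ ^ 2)) := by
    have hcont : Continuous fun t : ℝ ↦ f x - f y - (1 - t) * (m / 2 * ‖x - y‖ ^ 2) := by
      fun_prop
    simpa using (hcont.tendsto 0).mono_left nhdsWithin_le_nhds
  have hle : d ≤ f x - f y - m / 2 * ‖x - y‖ ^ 2 := by
    refine le_of_tendsto_of_tendsto hD hbound ?_
    filter_upwards [hD_le, Ioc_mem_nhdsGT zero_lt_one] with t hDt ht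
    exact hDt.trans (hf.slope_le x y ht.1 ht.2)
  linarith

lemma StrongConvexOn.add_sq_le_of_isMinOn {f : E → ℝ} {m : ℝ} {z : E}
    (hf : StrongConvexOn univ m f) (hz : IsMinOn f univ z) (x : E) :
    f z + m / 2 * ‖x - z‖ ^ 2 ≤ f x := by
  have hslope : ∀ᶠ t in 𝓝[>] (0 : ℝ), 0 ≤ t⁻¹ * (f (z + t • (x - z)) - f z) := by
    filter_upwards [self_mem_nhdsWithin] with t ht
    exact mul_nonneg (inv_nonneg.2 (le_of_lt ht)) (sub_nonneg.2 (isMinOn_univ_iff.1 hz _))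
  linarith [hf.add_sq_le_of_tendsto_of_le_slope x z tendsto_const_nhds hslope]

-- The paper's `m_L(y; x)`, with `f'` the gradient of `f`.
noncomputable def compositeModel (f : E → ℝ) (f' : E → E) (g : E → ℝ) (τ L : ℝ) (y x : E) : ℝ :=
  f y + ⟪f' y, x - y⟫ + L / 2 * ‖x - y‖ ^ 2 + τ * g x

lemma ConvexOn.strongConvexOn_compositeModel {g : E → ℝ} {τ : ℝ} (hg : ConvexOn ℝ univ g)
    (hτ : 0 ≤ τ) (f : E → ℝ) (f' : E → E) (L : ℝ) (y : E) :
    StrongConvexOn univ L (compositeModel f f' g τ L y) := by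
  rw [strongConvexOn_iff_convex]
  have hsplit : (fun x ↦ compositeModel f f' g τ L y x - L / 2 * ‖x‖ ^ 2) =
      fun x ↦ ⟪f' y - L • y, x⟫ + τ * g x + (f y - ⟪f' y, y⟫ + L / 2 * ‖y‖ ^ 2) := by
    ext x
    simp only [compositeModel, norm_sub_sq_real, inner_sub_left, inner_sub_right,
      real_inner_smul_left, real_inner_comm x y]
    ring
  rw [hsplit]
  exact ((((innerSL ℝ (f' y - L • y) : E →L[ℝ] ℝ) : E →ₗ[ℝ] ℝ).convexOn convex_univ).add
    (hg.smul hτ)).add_const _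

-- Also valid for `L = 0`, where `1 / (2 * L) = 0`.
lemma inner_smul_add_one_div_mul_norm_smul_sq (L : ℝ) (u w : E) :
    ⟪L • w, u⟫ + 1 / (2 * L) * ‖L • w‖ ^ 2 = L / 2 * ‖u + w‖ ^ 2 - L / 2 * ‖u‖ ^ 2 := by
  rw [norm_add_sq_real, norm_smul, real_inner_smul_left, Real.norm_eq_abs, mul_pow, sq_abs,
    real_inner_comm u w]
  rcases eq_or_ne L 0 with rfl | hL
  · simp
  · field_simp
    ring

variable [CompleteSpace E]

lemma HasGradientAt.hasDerivAt_comp_add_smul {f : E → ℝ} {g y d : E} {t : ℝ}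
    (hf : HasGradientAt f g (y + t • d)) :
    HasDerivAt (fun s : ℝ ↦ f (y + s • d)) ⟪g, d⟫ t := by
  have hline : HasDerivAt (fun s : ℝ ↦ y + s • d) d t := by
    simpa using ((hasDerivAt_id t).smul_const d).const_add y
  have hcomp := hf.hasFDerivAt.comp_hasDerivAt t hline
  simp only [InnerProductSpace.toDual_apply_apply] at hcomp
  exact hcomp

lemma StrongConvexOn.add_inner_add_sq_le {f : E → ℝ} {m : ℝ} {g y : E}
    (hf : StrongConvexOn univ m f) (hg : HasGradientAt f g y) (x : E) :
    f y + ⟪g, x - y⟫ + m / 2 * ‖x - y‖ ^ 2 ≤ f x := by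
  have hderiv : HasDerivAt (fun s : ℝ ↦ f (y + s • (x - y))) ⟪g, x - y⟫ 0 :=
    HasGradientAt.hasDerivAt_comp_add_smul (by simpa using hg)
  have hslope := hderiv.tendsto_slope_zero_right
  simp only [zero_add, zero_smul, add_zero, smul_eq_mul] at hslope
  linarith [hf.add_sq_le_of_tendsto_of_le_slope x y hslope (Eventually.of_forall fun _ ↦ le_rfl)]

lemma le_add_inner_add_sq_of_lipschitzWith_gradient {f : E → ℝ} {f' : E → E} {K : NNReal}
    (hf : ∀ x, HasGradientAt f (f' x) x) (hf' : LipschitzWith K f') (y z : E) :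
    f z ≤ f y + ⟪f' y, z - y⟫ + K / 2 * ‖z - y‖ ^ 2 := by
  set d := z - y
  let χ : ℝ → ℝ := fun t ↦ f (y + t • d) - t * ⟪f' y, d⟫ - K / 2 * ‖d‖ ^ 2 * t ^ 2
  have hχ : ∀ t, HasDerivAt χ (⟪f' (y + t • d) - f' y, d⟫ - K * ‖d‖ ^ 2 * t) t := by
    intro t
    have hline : HasDerivAt (fun s : ℝ ↦ f (y + s • d)) ⟪f' (y + t • d), d⟫ t :=
      (hf _).hasDerivAt_comp_add_smul
    refine ((hline.sub ((hasDerivAt_id t).mul_const ⟪f' y, d⟫)).sub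
      ((hasDerivAt_pow 2 t).const_mul (K / 2 * ‖d‖ ^ 2))).congr_deriv ?_
    rw [inner_sub_left]
    ring
  have hχ'_nonpos : ∀ t ∈ interior (Ici (0 : ℝ)),
      ⟪f' (y + t • d) - f' y, d⟫ - K * ‖d‖ ^ 2 * t ≤ 0 := by
    intro t ht
    rw [interior_Ici] at ht
    rw [sub_nonpos]
    calc ⟪f' (y + t • d) - f' y, d⟫ ≤ ‖f' (y + t • d) - f' y‖ * ‖d‖ := real_inner_le_norm _ _
      _ ≤ K * ‖t • d‖ * ‖d‖ := by
        gcongr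
        simpa using hf'.norm_sub_le (y + t • d) y
      _ = K * ‖d‖ ^ 2 * t := by
        rw [norm_smul, Real.norm_of_nonneg (le_of_lt ht)]
        ring
  have hanti := antitoneOn_of_hasDerivWithinAt_nonpos (convex_Ici 0)
    (fun t _ ↦ (hχ t).continuousAt.continuousWithinAt) (fun t _ ↦ (hχ t).hasDerivWithinAt)
    hχ'_nonpos
  have hχ10 : χ 1 ≤ χ 0 := hanti self_mem_Ici (mem_Ici.2 zero_le_one) zero_le_one
  have hχ0 : χ 0 = f y := by simp [χ]
  have hχ1 : χ 1 = f z - ⟪f' y, d⟫ - K / 2 * ‖d‖ ^ 2 := by simp [χ, d]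
  linarith

end

theorem composite_gradient_mapping_lower_bound_general (n : ℕ)
    (fhat ghat : EuclideanSpace ℝ (Fin n) → ℝ)
    (f' : EuclideanSpace ℝ (Fin n) → EuclideanSpace ℝ (Fin n))
    (T : EuclideanSpace ℝ (Fin n) → EuclideanSpace ℝ (Fin n))
    (τ Lfhat μ L : ℝ) (hτ : 0 < τ) (hLfhat : 0 ≤ Lfhat)
    (hfdiff : ∀ x, HasGradientAt fhat (f' x) x)
    (hfstrong : StrongConvexOn Set.univ μ fhat)
    (hflip : LipschitzWith (Real.toNNReal Lfhat) f')
    (hgconv : ConvexOn ℝ Set.univ ghat)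
    (hL : Lfhat ≤ L)
    (hT : ∀ y x : EuclideanSpace ℝ (Fin n),
      fhat y + ⟪f' y, T y - y⟫ + L / 2 * ‖T y - y‖ ^ 2 + τ * ghat (T y)
        ≤ fhat y + ⟪f' y, x - y⟫ + L / 2 * ‖x - y‖ ^ 2 + τ * ghat x) :
    ∀ x y : EuclideanSpace ℝ (Fin n),
      fhat x + τ * ghat x ≥
        fhat (T y) + τ * ghat (T y) + ⟪L • (y - T y), x - y⟫
          + μ / 2 * ‖x - y‖ ^ 2 + 1 / (2 * L) * ‖L • (y - T y)‖ ^ 2 := by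
  intro x y
  have hlower := hfstrong.add_inner_add_sq_le (hfdiff y) x
  have hdescent := le_add_inner_add_sq_of_lipschitzWith_gradient hfdiff hflip y (T y)
  rw [Real.coe_toNNReal _ hLfhat] at hdescent
  have hLfhat_le : Lfhat / 2 * ‖T y - y‖ ^ 2 ≤ L / 2 * ‖T y - y‖ ^ 2 := by gcongr
  have hmodel := (hgconv.strongConvexOn_compositeModel hτ.le fhat f' L y).add_sq_le_of_isMinOn
    (isMinOn_univ_iff.2 (hT y)) x
  have hresidual := inner_smul_add_one_div_mul_norm_smul_sq L (x - y) (y - T y)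
  rw [sub_add_sub_cancel] at hresidual
  unfold compositeModel at hmodel
  linarith

/-- Composite gradient mapping lower bound (Theorem 1 of the paper).
With T_L(y) the minimizer of the composite model and r_L(y) = L(y - T_L(y)),
F(x) ≥ f̂(T_L(y)) + τĝ(T_L(y)) + ⟨r_L(y), x - y⟩ + (μ/2)‖x-y‖² + (1/(2L))‖r_L(y)‖². -/
theorem composite_gradient_mapping_lower_bound (n : ℕ)
    (fhat ghat : EuclideanSpace ℝ (Fin n) → ℝ)
    (f' : EuclideanSpace ℝ (Fin n) → EuclideanSpace ℝ (Fin n))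
    (T : EuclideanSpace ℝ (Fin n) → EuclideanSpace ℝ (Fin n))
    (τ Lfhat μ L : ℝ) (hτ : 0 < τ) (hLfhat : 0 ≤ Lfhat) (hμ : 0 ≤ μ)
    (hfdiff : ∀ x, HasGradientAt fhat (f' x) x)
    (hfstrong : StrongConvexOn Set.univ μ fhat)
    (hflip : LipschitzWith (Real.toNNReal Lfhat) f')
    (hgconv : ConvexOn ℝ Set.univ ghat)
    (hL : Lfhat ≤ L)
    (hT : ∀ y x : EuclideanSpace ℝ (Fin n),
      fhat y + ⟪f' y, T y - y⟫ + L / 2 * ‖T y - y‖ ^ 2 + τ * ghat (T y)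
        ≤ fhat y + ⟪f' y, x - y⟫ + L / 2 * ‖x - y‖ ^ 2 + τ * ghat x) :
    ∀ x y : EuclideanSpace ℝ (Fin n),
      fhat x + τ * ghat x ≥
        fhat (T y) + τ * ghat (T y) + ⟪L • (y - T y), x - y⟫
          + μ / 2 * ‖x - y‖ ^ 2 + 1 / (2 * L) * ‖L • (y - T y)‖ ^ 2 :=
  composite_gradient_mapping_lower_bound_general n fhat ghat f' T τ Lfhat μ L hτ hLfhat hfdiff
    hfstrong hflip hgconv hL hT
end

section
/- Recursive construction preserves the estimating-sequence property: with λ_0 = 1, ψ_0 = 0, λ_{k+1} = (1-α_k)λ_k for α_k ∈ (0,1), ψ_k ≥ 0 bounded above by Ψ, and Φ_{k+1}(x) = (1-α_k)(Φ_k(x) + ψ_k(x)) - ψ_{k+1}(x) - Ψ + α_k ℓ_k(x) + α_k ψ_k(x) where ℓ_k(x) ≤ F(x) is a global lower bound on F, the sequences satisfy Φ_k(x) ≤ λ_k Φ_0(x) + (1-λ_k)(F(x) - ψ_k(x)) for all k and x. -/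
/-! Induction on `k`: since `λ_{k+1} = (1 - α_k) λ_k`, the coefficients of
`Φ_0` and `F` propagate exactly, and the leftover `((1 - α_k) λ_k + α_k) ψ_k - Ψ` is nonpositive
because its weight is at most `1` and `ψ_k ≤ Ψ`; it is therefore dominated by `λ_{k+1} ψ_{k+1} ≥ 0`. -/

theorem mem_Icc_of_succ_eq_one_sub_mul {α lam : ℕ → ℝ} (hα : ∀ k, α k ∈ Set.Icc (0 : ℝ) 1)
    (hlam0 : lam 0 = 1) (hlamrec : ∀ k, lam (k + 1) = (1 - α k) * lam k) (k : ℕ) :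
    lam k ∈ Set.Icc (0 : ℝ) 1 := by
  induction k with
  | zero => simp [hlam0]
  | succ k ih =>
    obtain ⟨hα₀, hα₁⟩ := hα k
    rw [hlamrec k]
    exact ⟨mul_nonneg (by linarith) ih.1, mul_le_one₀ (by linarith) ih.1 ih.2⟩

theorem estimating_bound_succ {a lam Φ₀ Φ F ℓ ψ ψ' Ψ : ℝ} (ha : a ∈ Set.Icc (0 : ℝ) 1)
    (hlam : lam ∈ Set.Icc (0 : ℝ) 1) (hψ : 0 ≤ ψ) (hψ' : 0 ≤ ψ') (hψΨ : ψ ≤ Ψ) (hℓ : ℓ ≤ F)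
    (hΦ : Φ ≤ lam * Φ₀ + (1 - lam) * (F - ψ)) :
    (1 - a) * (Φ + ψ) - ψ' - Ψ + a * ℓ + a * ψ
      ≤ (1 - a) * lam * Φ₀ + (1 - (1 - a) * lam) * (F - ψ') := by
  obtain ⟨ha₀, ha₁⟩ := ha
  obtain ⟨hlam₀, hlam₁⟩ := hlam
  have h1a : 0 ≤ 1 - a := by linarith
  have hweight : (1 - a) * lam + a ≤ 1 := by nlinarith
  have hleftover : ((1 - a) * lam + a) * ψ - Ψ ≤ 0 := by nlinarith
  have hψ'_weighted : 0 ≤ (1 - a) * lam * ψ' := by positivity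
  calc (1 - a) * (Φ + ψ) - ψ' - Ψ + a * ℓ + a * ψ
      ≤ (1 - a) * (lam * Φ₀ + (1 - lam) * (F - ψ) + ψ) - ψ' - Ψ + a * F + a * ψ := by gcongr
    _ = (1 - a) * lam * Φ₀ + (1 - (1 - a) * lam) * F
          + (((1 - a) * lam + a) * ψ - Ψ) - ψ' := by ring
    _ ≤ (1 - a) * lam * Φ₀ + (1 - (1 - a) * lam) * (F - ψ') := by linarith

theorem recursive_estimating_sequences_general (n : ℕ)
    (F : EuclideanSpace ℝ (Fin n) → ℝ)
    (α : ℕ → ℝ) (hα : ∀ k, α k ∈ Set.Ioo (0 : ℝ) 1)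
    (Ψ : ℝ)
    (ψ : ℕ → EuclideanSpace ℝ (Fin n) → ℝ)
    (hψpos : ∀ k x, 0 ≤ ψ k x) (hψbdd : ∀ k x, ψ k x ≤ Ψ)
    (lam : ℕ → ℝ) (hlam0 : lam 0 = 1)
    (hlamrec : ∀ k, lam (k + 1) = (1 - α k) * lam k)
    (ℓ : ℕ → EuclideanSpace ℝ (Fin n) → ℝ)
    (hℓ : ∀ k x, ℓ k x ≤ F x)
    (Φ : ℕ → EuclideanSpace ℝ (Fin n) → ℝ)
    (hΦrec : ∀ k x, Φ (k + 1) x =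
      (1 - α k) * (Φ k x + ψ k x) - ψ (k + 1) x - Ψ
        + α k * ℓ k x + α k * ψ k x) :
    ∀ k x, Φ k x ≤ lam k * Φ 0 x + (1 - lam k) * (F x - ψ k x) := by
  have hα' : ∀ k, α k ∈ Set.Icc (0 : ℝ) 1 := fun k => Set.Ioo_subset_Icc_self (hα k)
  have hlam := mem_Icc_of_succ_eq_one_sub_mul hα' hlam0 hlamrec
  intro k
  induction k with
  | zero => intro x; simp [hlam0]
  | succ k ih =>
    intro x
    rw [hΦrec, hlamrec]
    exact estimating_bound_succ (hα' k) (hlam k) (hψpos k x) (hψpos (k + 1) x) (hψbdd k x)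
      (hℓ k x) (ih x)

/-- The recursive construction (Lemma 2 of the paper) produces
generalized composite estimating sequences:
Φ_k(x) ≤ λ_k Φ_0(x) + (1-λ_k)(F(x) - ψ_k(x)) for all k and x. -/
theorem recursive_estimating_sequences (n : ℕ)
    (F : EuclideanSpace ℝ (Fin n) → ℝ)
    (α : ℕ → ℝ) (hα : ∀ k, α k ∈ Set.Ioo (0 : ℝ) 1)
    (hαdiv : Filter.Tendsto (fun m => ∑ k ∈ Finset.range m, α k)
      Filter.atTop Filter.atTop)
    (Ψ : ℝ)
    (ψ : ℕ → EuclideanSpace ℝ (Fin n) → ℝ)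
    (hψpos : ∀ k x, 0 ≤ ψ k x) (hψbdd : ∀ k x, ψ k x ≤ Ψ)
    (hψ0 : ∀ x, ψ 0 x = 0)
    (lam : ℕ → ℝ) (hlam0 : lam 0 = 1)
    (hlamrec : ∀ k, lam (k + 1) = (1 - α k) * lam k)
    (ℓ : ℕ → EuclideanSpace ℝ (Fin n) → ℝ)
    (hℓ : ∀ k x, ℓ k x ≤ F x)
    (Φ : ℕ → EuclideanSpace ℝ (Fin n) → ℝ)
    (hΦrec : ∀ k x, Φ (k + 1) x =
      (1 - α k) * (Φ k x + ψ k x) - ψ (k + 1) x - Ψ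
        + α k * ℓ k x + α k * ψ k x) :
    ∀ k x, Φ k x ≤ lam k * Φ 0 x + (1 - lam k) * (F x - ψ k x) :=
  recursive_estimating_sequences_general n F α hα Ψ ψ hψpos hψbdd lam hlam0 hlamrec ℓ hℓ Φ hΦrec
end

section
/- Under the choices L_k α_k² = γ_{k+1} and y_k chosen so that (1-α_k)[x_k - y_k + (α_k γ_k/γ_{k+1})(v_k - y_k) + (α_k²/γ_{k+1})Σ_{j<k}β_{j,k}γ_j(v_j - y_k)] = 0, the lower bound Φ*_{k+1} ≥ F(T_{L_k}(y_k)) holds, completing the induction step F(x_{k+1}) ≤ Φ*_{k+1} with x_{k+1} = T_{L_k}(y_k). -/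
/-!
With `γ_{k+1} = L α²` the coefficient of `‖r‖²` in (39) vanishes, and the remaining terms are
`(1 - α) / γ_{k+1}` times the inner product of `r` with the weighted sum of the deviations
`x_k - y`, `v_k - y`, `v_j - y`. Since `y` is the mean with exactly these (nonnegative, not all
zero) weights, that sum is zero.
-/

open RealInnerProductSpace

theorem smul_sub_add_smul_sub_add_smul_sum_sub_eq_zero {K E ι : Type*} [Field K]
    [AddCommGroup E] [Module K E] (s : Finset ι) (a b c : K) (w : ι → K) (x u y : E) (p : ι → E)
    (hS : a + b + c * ∑ i ∈ s, w i ≠ 0)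
    (hy : y = (a + b + c * ∑ i ∈ s, w i)⁻¹ • (a • x + b • u + c • ∑ i ∈ s, w i • p i)) :
    a • (x - y) + b • (u - y) + c • ∑ i ∈ s, w i • (p i - y) = 0 := by
  have hSy : (a + b + c * ∑ i ∈ s, w i) • y = a • x + b • u + c • ∑ i ∈ s, w i • p i := by
    rw [hy, smul_smul, mul_inv_cancel₀ hS, one_smul]
  simp only [smul_sub, Finset.sum_sub_distrib, ← Finset.sum_smul, add_smul, mul_smul] at hSy ⊢
  linear_combination (norm := module) -hSy

theorem inner_sub_add_inner_sub_add_sum_inner_sub_eq_zero {E ι : Type*}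
    [NormedAddCommGroup E] [InnerProductSpace ℝ E] (s : Finset ι) (a b c : ℝ) (w : ι → ℝ)
    (x u y r : E) (p : ι → E) (hS : a + b + c * ∑ i ∈ s, w i ≠ 0)
    (hy : y = (a + b + c * ∑ i ∈ s, w i)⁻¹ • (a • x + b • u + c • ∑ i ∈ s, w i • p i)) :
    a * ⟪x - y, r⟫ + b * ⟪u - y, r⟫ + c * ∑ i ∈ s, w i * ⟪p i - y, r⟫ = 0 := by
  have h := congrArg (⟪·, r⟫)
    (smul_sub_add_smul_sub_add_smul_sum_sub_eq_zero s a b c w x u y p hS hy)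
  simpa only [inner_add_left, real_inner_smul_left, sum_inner, inner_zero_left] using h

/-- With L α² = γ_{k+1} and y_k the weighted average
(γ_{k+1}x_k + αγ_k v_k + α²Σβγ v_j)/(γ_{k+1} + αγ_k + α²Σβγ), inequality (39)
implies Φ*_{k+1} ≥ F(T_{L_k}(y_k)), completing the induction step. -/
theorem induction_step_lower_bound (n : ℕ) (k : ℕ)
    (γ : ℕ → ℝ) (hγ : ∀ j, 0 ≤ γ j)
    (v : ℕ → EuclideanSpace ℝ (Fin n))
    (β : ℕ → ℝ) (hβ : ∀ j, 0 ≤ β j)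
    (α L γnext Φstar FT : ℝ)
    (hα : α ∈ Set.Ioo (0 : ℝ) 1) (hL : 0 < L)
    (hγnext : γnext = L * α ^ 2)
    (xk vk r y : EuclideanSpace ℝ (Fin n))
    (hy : y = (γnext + α * γ k + α ^ 2 * ∑ j ∈ Finset.Ico 1 k, β j * γ j)⁻¹ •
      (γnext • xk + (α * γ k) • vk +
        (α ^ 2) • ∑ j ∈ Finset.Ico 1 k, (β j * γ j) • v j))
    (h39 : Φstar ≥ FT + (1 - α) * ⟪r, xk - y⟫
        + (1 / (2 * L) - α ^ 2 / (2 * γnext)) * ‖r‖ ^ 2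
        + (α * γ k * (1 - α) / γnext) * ⟪vk - y, r⟫
        + (α ^ 2 * (1 - α) / γnext) *
            ∑ j ∈ Finset.Ico 1 k, β j * γ j * ⟪v j - y, r⟫) :
    Φstar ≥ FT := by
  have hγnext_pos : 0 < γnext := hγnext ▸ mul_pos hL (pow_pos hα.1 2)
  have hweight : 0 < γnext + α * γ k + α ^ 2 * ∑ j ∈ Finset.Ico 1 k, β j * γ j := by
    have hvk_weight := mul_nonneg hα.1.le (hγ k)
    have hv_weight : 0 ≤ α ^ 2 * ∑ j ∈ Finset.Ico 1 k, β j * γ j :=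
      mul_nonneg (sq_nonneg α) (Finset.sum_nonneg fun j _ => mul_nonneg (hβ j) (hγ j))
    linarith
  have hdev := inner_sub_add_inner_sub_add_sum_inner_sub_eq_zero (Finset.Ico 1 k) γnext
    (α * γ k) (α ^ 2) (fun j => β j * γ j) xk vk y r v hweight.ne' hy
  have hquad : 1 / (2 * L) - α ^ 2 / (2 * γnext) = 0 :=
    sub_eq_zero.2 (by rw [hγnext]; field_simp [hα.1.ne'])
  have hlinear : (1 - α) * ⟪r, xk - y⟫ + (α * γ k * (1 - α) / γnext) * ⟪vk - y, r⟫
      + (α ^ 2 * (1 - α) / γnext) * ∑ j ∈ Finset.Ico 1 k, β j * γ j * ⟪v j - y, r⟫ = 0 := by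
    rw [real_inner_comm, ← mul_zero ((1 - α) / γnext), ← hdev]
    field_simp
  rw [hquad, zero_mul] at h39
  linarith
end

section
/- Theorem: if λ_0 = 1 and λ_k = Π_{j=0}^{k-1}(1 - α_j), then the algorithm's iterates satisfy F(x_k) - F(x*) ≤ λ_k (F(x_0) - F(x*) + (γ_0/2)‖x_0 - x*‖²) - (1 - λ_k)ψ_k(x*). -/
theorem sub_le_of_le_estimate {E : Type*} (F Φ Φ₀ ψ : E → ℝ) (lam : ℝ) {y x : E}
    (hy : F y ≤ Φ x) (hΦ : Φ x ≤ lam * Φ₀ x + (1 - lam) * (F x - ψ x)) :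
    F y - F x ≤ lam * (Φ₀ x - F x) - (1 - lam) * ψ x := by
  linarith

theorem algorithm_convergence_bound_general (n : ℕ)
    (F : EuclideanSpace ℝ (Fin n) → ℝ)
    (Q : Set (EuclideanSpace ℝ (Fin n)))
    (Φ ψ : ℕ → EuclideanSpace ℝ (Fin n) → ℝ)
    (lam : ℕ → ℝ)
    (γ0 : ℝ)
    (x0 : EuclideanSpace ℝ (Fin n))
    (hΦ0 : ∀ x, Φ 0 x = F x0 + γ0 / 2 * ‖x - x0‖ ^ 2)
    (hEst : ∀ k, ∀ x ∈ Q,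
      Φ k x ≤ lam k * Φ 0 x + (1 - lam k) * (F x - ψ k x))
    (xseq : ℕ → EuclideanSpace ℝ (Fin n))
    (hxseq : ∀ k, ∀ x ∈ Q, F (xseq k) ≤ Φ k x)
    (xstar : EuclideanSpace ℝ (Fin n)) (hxstarQ : xstar ∈ Q) :
    ∀ k, F (xseq k) - F xstar ≤
      lam k * (F x0 - F xstar + γ0 / 2 * ‖x0 - xstar‖ ^ 2)
        - (1 - lam k) * ψ k xstar := by
  intro k
  have h := sub_le_of_le_estimate F (Φ k) (Φ 0) (ψ k) (lam k)
    (hxseq k xstar hxstarQ) (hEst k xstar hxstarQ)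
  rw [hΦ0, norm_sub_rev] at h
  linarith

/-- Theorem 3 of the paper. With λ_k = Π_{j=0}^{k-1}(1 - α_j) and the
generalized composite estimating sequence property, the iterates satisfy
F(x_k) - F(x*) ≤ λ_k (F(x_0) - F(x*) + (γ_0/2)‖x_0 - x*‖²) - (1 - λ_k) ψ_k(x*). -/
theorem algorithm_convergence_bound (n : ℕ)
    (F : EuclideanSpace ℝ (Fin n) → ℝ)
    (Q : Set (EuclideanSpace ℝ (Fin n)))
    (Φ ψ : ℕ → EuclideanSpace ℝ (Fin n) → ℝ)
    (α : ℕ → ℝ) (lam : ℕ → ℝ)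
    (hlam : ∀ k, lam k = ∏ j ∈ Finset.range k, (1 - α j))
    (γ0 : ℝ)
    (x0 : EuclideanSpace ℝ (Fin n)) (hx0Q : x0 ∈ Q)
    (hΦ0 : ∀ x, Φ 0 x = F x0 + γ0 / 2 * ‖x - x0‖ ^ 2)
    (hEst : ∀ k, ∀ x ∈ Q,
      Φ k x ≤ lam k * Φ 0 x + (1 - lam k) * (F x - ψ k x))
    (xseq : ℕ → EuclideanSpace ℝ (Fin n))
    (hxseq : ∀ k, ∀ x ∈ Q, F (xseq k) ≤ Φ k x)
    (xstar : EuclideanSpace ℝ (Fin n)) (hxstarQ : xstar ∈ Q)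
    (hmin : ∀ x ∈ Q, F xstar ≤ F x) :
    ∀ k, F (xseq k) - F xstar ≤
      lam k * (F x0 - F xstar + γ0 / 2 * ‖x0 - xstar‖ ^ 2)
        - (1 - lam k) * ψ k xstar :=
  algorithm_convergence_bound_general n F Q Φ ψ lam γ0 x0 hΦ0 hEst xseq hxseq xstar hxstarQ
end

section
/- Relating the decrease ratio to the curvature: with λ_{k+1} = (1-α_k)λ_k, α_k = √(γ_{k+1}/L_k), γ_{k+1} = (1-α_k)γ_k + α_k σ_k, and λ_0 = 1, one has γ_{k+1} - σ_k = λ_{k+1}(γ_0 - σ_k) when σ_k is held constant across iterations, and hence 1/√(λ_{k+1}) - 1/√(λ_k) ≥ (1/2)√(σ_k/(λ_{k+1}L_k) + (γ_0 - σ_k)/L_k). -/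
/-! Both `γ k - σ` and `λ k` are multiplied by `1 - α k` at each step, which gives the identity.
Substituting it and `α_k² L_k = γ_{k+1}`, the right-hand side of the bound becomes
`α_k / (2 √λ_{k+1})` with `α_k = (λ_k - λ_{k+1}) / λ_k`; since
`λ_k - λ_{k+1} = (√λ_k - √λ_{k+1})(√λ_k + √λ_{k+1}) ≤ 2 √λ_k (√λ_k - √λ_{k+1})`,
this is at most `(√λ_k - √λ_{k+1}) / (√λ_k √λ_{k+1}) = 1/√λ_{k+1} - 1/√λ_k`. -/

open Real

lemma sub_div_le_one_div_sqrt_sub_one_div_sqrt {x y : ℝ} (hy : 0 < y) (hyx : y ≤ x) :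
    (x - y) / (2 * x * √y) ≤ 1 / √y - 1 / √x := by
  obtain ⟨a, ha, rfl⟩ : ∃ a, 0 < a ∧ y = a ^ 2 := ⟨√y, sqrt_pos.2 hy, (sq_sqrt hy.le).symm⟩
  obtain ⟨b, hb, rfl⟩ : ∃ b, 0 < b ∧ x = b ^ 2 :=
    ⟨√x, sqrt_pos.2 (hy.trans_le hyx), (sq_sqrt (hy.le.trans hyx)).symm⟩
  have hab : a ≤ b := (pow_le_pow_iff_left₀ ha.le hb.le two_ne_zero).1 hyx
  rw [sqrt_sq ha.le, sqrt_sq hb.le]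
  calc (b ^ 2 - a ^ 2) / (2 * b ^ 2 * a) = (b - a) / (a * b) * ((b + a) / (2 * b)) := by
        field_simp
        ring
    _ ≤ (b - a) / (a * b) * 1 := by
        gcongr
        rw [div_le_one (by positivity)]
        linarith
    _ = 1 / a - 1 / b := by
        field_simp

section Recurrence

variable {lam γ α : ℕ → ℝ} {σ : ℝ}

lemma pos_of_mul_one_sub_rec (hlam0 : 0 < lam 0) (hα : ∀ k, α k < 1)
    (hlamrec : ∀ k, lam (k + 1) = (1 - α k) * lam k) (k : ℕ) : 0 < lam k := by
  induction k with
  | zero => exact hlam0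
  | succ n ih =>
    rw [hlamrec n]
    exact mul_pos (sub_pos.2 (hα n)) ih

lemma sub_eq_mul_sub_of_rec (hlam0 : lam 0 = 1)
    (hlamrec : ∀ k, lam (k + 1) = (1 - α k) * lam k)
    (hγrec : ∀ k, γ (k + 1) = (1 - α k) * γ k + α k * σ) (k : ℕ) :
    γ k - σ = lam k * (γ 0 - σ) := by
  induction k with
  | zero => rw [hlam0, one_mul]
  | succ n ih =>
    rw [hγrec n, hlamrec n]
    linear_combination (1 - α n) * ih

end Recurrence

lemma div_mul_add_sub_div_eq {σ γ₀ γ' lam' L : ℝ} (hlam' : lam' ≠ 0)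
    (hγ' : γ' - σ = lam' * (γ₀ - σ)) :
    σ / (lam' * L) + (γ₀ - σ) / L = γ' / L / lam' := by
  rcases eq_or_ne L 0 with rfl | hL
  · simp
  field_simp
  linear_combination -hγ'

theorem decrease_ratio_curvature_general (lam γ α L : ℕ → ℝ) (σ : ℝ)
    (hlam0 : lam 0 = 1)
    (hα : ∀ k, α k ∈ Set.Ioo (0 : ℝ) 1)
    (hlamrec : ∀ k, lam (k + 1) = (1 - α k) * lam k)
    (hγrec : ∀ k, γ (k + 1) = (1 - α k) * γ k + α k * σ)
    (hαval : ∀ k, (α k) ^ 2 = γ (k + 1) / L k) :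
    (∀ k, γ (k + 1) - σ = lam (k + 1) * (γ 0 - σ)) ∧
    (∀ k, 1 / Real.sqrt (lam (k + 1)) - 1 / Real.sqrt (lam k) ≥
      1 / 2 * Real.sqrt (σ / (lam (k + 1) * L k) + (γ 0 - σ) / L k)) := by
  have hγ := sub_eq_mul_sub_of_rec hlam0 hlamrec hγrec
  refine ⟨fun k => hγ (k + 1), fun k => ?_⟩
  have hlam := pos_of_mul_one_sub_rec (hlam0 ▸ one_pos) (fun k => (hα k).2) hlamrec
  have hdrop : lam k - lam (k + 1) = α k * lam k := by rw [hlamrec k]; ring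
  rw [div_mul_add_sub_div_eq (hlam (k + 1)).ne' (hγ (k + 1)), ← hαval k,
    sqrt_div (sq_nonneg _), sqrt_sq (hα k).1.le, ge_iff_le]
  convert sub_div_le_one_div_sqrt_sub_one_div_sqrt (x := lam k) (hlam (k + 1))
    (by linarith [mul_pos (hα k).1 (hlam k)]) using 1
  rw [hdrop]
  field_simp [(hlam k).ne']

/-- With λ_{k+1} = (1-α_k)λ_k, α_k = √(γ_{k+1}/L_k),
γ_{k+1} = (1-α_k)γ_k + α_k σ and λ_0 = 1, one has γ_{k+1} - σ = λ_{k+1}(γ_0 - σ),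
and 1/√λ_{k+1} - 1/√λ_k ≥ (1/2)√(σ/(λ_{k+1} L_k) + (γ_0 - σ)/L_k). -/
theorem decrease_ratio_curvature (lam γ α L : ℕ → ℝ) (σ : ℝ)
    (hlam0 : lam 0 = 1)
    (hα : ∀ k, α k ∈ Set.Ioo (0 : ℝ) 1)
    (hlamrec : ∀ k, lam (k + 1) = (1 - α k) * lam k)
    (hγrec : ∀ k, γ (k + 1) = (1 - α k) * γ k + α k * σ)
    (hL : ∀ k, 0 < L k)
    (hαval : ∀ k, (α k) ^ 2 = γ (k + 1) / L k)
    (hγ0 : 0 ≤ γ 0) :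
    (∀ k, γ (k + 1) - σ = lam (k + 1) * (γ 0 - σ)) ∧
    (∀ k, 1 / Real.sqrt (lam (k + 1)) - 1 / Real.sqrt (lam k) ≥
      1 / 2 * Real.sqrt (σ / (lam (k + 1) * L k) + (γ 0 - σ) / L k)) :=
  decrease_ratio_curvature_general lam γ α L σ hlam0 hα hlamrec hγrec hαval
end
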